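/- arXiv:2208.06896 — 3 statements merged into one kernel-verified Lean document; each statement's English description precedes it below -/
import Mathlib

section
/- Let μ be a compactly supported finite Borel measure on ℝ³ and γ : I → S² continuous on a compact interval I. Then the set {θ ∈ I : ρ_{θ#}μ is not absolutely continuous with respect to ℋ¹} is Borel measurable, where ρ_θ is orthogonal projection onto the span of γ(θ). -/
open MeasureTheory Metric Set Filter
open scoped ENNReal NNReal RealInnerProductSpace Topology

noncomputable section

abbrev E3 : Type := EuclideanSpace ℝ (Fin 3)

/-- Cross product of two vectors in `ℝ³`. -/
def cross3 (u v : E3) : E3 :=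
  WithLp.toLp 2 ![u 1 * v 2 - u 2 * v 1, u 2 * v 0 - u 0 * v 2, u 0 * v 1 - u 1 * v 0]

/-- Scalar triple product `det(u, v, w)`. -/
def det3 (u v w : E3) : ℝ := ⟪u, cross3 v w⟫

/-!
A finite measure `σ` on `ℝ` is absolutely continuous iff the integral of its upper density
`limsup σ(B(t, r_n)) / |B(t, r_n)|` is its total mass, since by Besicovitch differentiation the
upper density is a.e. the Radon–Nikodym derivative. For the projections `σ_θ` of `μ`, the mass
`σ_θ(B(t, r))` is measurable in `(θ, t)`, being the `μ`-measure of a slice of the closed set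
`{((θ, t), x) | |⟪x, γ θ⟫ - t| ≤ r}`; by Tonelli so is `θ ↦ ∫ upper density of σ_θ`. Finally,
projecting onto the line spanned by the unit vector `γ θ` is the scalar projection followed by
an isometric embedding of `ℝ`, which carries Lebesgue measure to `ℋ¹` on that line.
-/

theorem MeasureTheory.Measure.absolutelyContinuous_iff_lintegral_rnDeriv_eq
    {α : Type*} [MeasurableSpace α] (μ ν : Measure α) [IsFiniteMeasure μ]
    [μ.HaveLebesgueDecomposition ν] :
    μ ≪ ν ↔ ∫⁻ x, μ.rnDeriv ν x ∂ν = μ univ := by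
  refine ⟨Measure.lintegral_rnDeriv, fun h => ?_⟩
  have hdecomp : μ.singularPart ν univ + μ univ = 0 + μ univ := by
    conv_lhs => rw [← h, ← setLIntegral_univ, ← withDensity_apply _ MeasurableSet.univ,
      ← Measure.add_apply, ← μ.haveLebesgueDecomposition_add ν]
    rw [zero_add]
  rw [← Measure.singularPart_eq_zero, ← Measure.measure_univ_eq_zero]
  exact (ENNReal.add_left_inj (measure_ne_top μ univ)).1 hdecomp

section UpperDensity

variable {X : Type*} [MetricSpace X] [MeasurableSpace X]

-- The paper's `n σ(B(t, 1/n))`, along radii `1/(n+1)` and normalised by `ν(B)` rather than `2/n`.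
def upperDensity (σ ν : Measure X) (x : X) : ℝ≥0∞ :=
  limsup (fun n : ℕ => σ (closedBall x (1 / (n + 1))) / ν (closedBall x (1 / (n + 1)))) atTop

theorem ae_upperDensity_eq_rnDeriv [BorelSpace X] [SecondCountableTopology X]
    [HasBesicovitchCovering X] (σ ν : Measure X) [IsLocallyFiniteMeasure σ]
    [IsLocallyFiniteMeasure ν] :
    ∀ᵐ x ∂ν, upperDensity σ ν x = σ.rnDeriv ν x := by
  have hradii : Tendsto (fun n : ℕ => 1 / ((n : ℝ) + 1)) atTop (𝓝[>] 0) :=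
    tendsto_nhdsWithin_iff.2 ⟨tendsto_one_div_add_atTop_nhds_zero_nat,
      Eventually.of_forall fun n => mem_Ioi.2 Nat.one_div_pos_of_nat⟩
  filter_upwards [Besicovitch.ae_tendsto_rnDeriv σ ν] with x hx
  exact (hx.comp hradii).limsup_eq

theorem absolutelyContinuous_iff_lintegral_upperDensity_eq [BorelSpace X]
    [SecondCountableTopology X] [HasBesicovitchCovering X] (σ ν : Measure X)
    [IsFiniteMeasure σ] [IsLocallyFiniteMeasure ν] :
    σ ≪ ν ↔ ∫⁻ x, upperDensity σ ν x ∂ν = σ univ := by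
  rw [lintegral_congr_ae (ae_upperDensity_eq_rnDeriv σ ν),
    Measure.absolutelyContinuous_iff_lintegral_rnDeriv_eq]

end UpperDensity

section Projections

variable {Θ E : Type*} [TopologicalSpace Θ] [MeasurableSpace Θ]
  [OpensMeasurableSpace Θ] [TopologicalSpace E] [SecondCountableTopology E] [MeasurableSpace E]
  [OpensMeasurableSpace E]

theorem measurable_map_apply_closedBall {f : Θ × E → ℝ} (hf : Continuous f) (μ : Measure E)
    [SFinite μ] (r : ℝ) :
    Measurable fun p : Θ × ℝ => μ.map (fun x => f (p.1, x)) (closedBall p.2 r) := by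
  have hclosed : IsClosed {q : (Θ × ℝ) × E | f (q.1.1, q.2) ∈ closedBall q.1.2 r} :=
    isClosed_le ((hf.comp (continuous_fst.fst.prodMk continuous_snd)).dist continuous_fst.snd)
      continuous_const
  convert measurable_measure_prodMk_left (ν := μ) hclosed.measurableSet using 1
  ext p
  rw [Measure.map_apply (by fun_prop) measurableSet_closedBall]
  rfl

theorem measurable_upperDensity_map {f : Θ × E → ℝ} (hf : Continuous f) (μ : Measure E)
    [SFinite μ] :
    Measurable fun p : Θ × ℝ => upperDensity (μ.map fun x => f (p.1, x)) volume p.2 := by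
  refine Measurable.limsup fun n => (measurable_map_apply_closedBall hf μ _).div ?_
  simp only [Real.volume_closedBall]
  exact measurable_const

theorem measurableSet_setOf_map_absolutelyContinuous {f : Θ × E → ℝ} (hf : Continuous f)
    (μ : Measure E) [IsFiniteMeasure μ] :
    MeasurableSet {θ | μ.map (fun x => f (θ, x)) ≪ volume} := by
  have hmass : ∀ θ, μ.map (fun x => f (θ, x)) univ = μ univ := fun θ => by
    rw [Measure.map_apply (by fun_prop) .univ, preimage_univ]
  simp only [absolutelyContinuous_iff_lintegral_upperDensity_eq, hmass]
  exact (measurable_upperDensity_map hf μ).lintegral_prod_right' (measurableSet_singleton _)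

end Projections

theorem Isometry.map_absolutelyContinuous_hausdorffMeasure_iff {X : Type*} [EMetricSpace X]
    [MeasurableSpace X] [BorelSpace X] {ι : ℝ → X} (hι : Isometry ι) (σ : Measure ℝ) :
    σ.map ι ≪ μH[1] ↔ σ ≪ volume := by
  have hemb : MeasurableEmbedding ι := hι.isClosedEmbedding.measurableEmbedding
  rw [← hausdorffMeasure_real]
  refine ⟨fun h => .mk fun s _ hs => ?_, fun h => .mk fun t _ ht => ?_⟩
  · rw [← hι.injective.preimage_image s, ← hemb.map_apply]
    exact h (by rwa [hι.hausdorffMeasure_image (Or.inl zero_le_one)])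
  · rw [hemb.map_apply]
    refine h ?_
    rw [hι.hausdorffMeasure_preimage (Or.inl zero_le_one)]
    exact measure_mono_null inter_subset_left ht

theorem map_inner_smul_absolutelyContinuous_hausdorffMeasure_iff {F : Type*}
    [NormedAddCommGroup F] [InnerProductSpace ℝ F] [MeasurableSpace F] [BorelSpace F]
    {v : F} (hv : ‖v‖ = 1) (μ : Measure F) :
    μ.map (fun x => ⟪x, v⟫ • v) ≪ μH[1] ↔ μ.map (fun x => ⟪x, v⟫) ≪ volume := by
  have hι := (LinearIsometry.toSpanSingleton ℝ F hv).isometry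
  have hinner : Measurable fun x : F => ⟪x, v⟫ := (continuous_id.inner continuous_const).measurable
  rw [← hι.map_absolutelyContinuous_hausdorffMeasure_iff, Measure.map_map hι.continuous.measurable
    hinner]
  rfl

theorem stmt5_general (a b : ℝ) (γ : ℝ → E3)
    (hγ : ContinuousOn γ (Icc a b))
    (hsphere : ∀ θ ∈ Icc a b, ‖γ θ‖ = 1)
    (μ : Measure E3) [IsFiniteMeasure μ] :
    MeasurableSet {θ ∈ Icc a b |
      ¬ Measure.map (fun x : E3 => ⟪x, γ θ⟫ • γ θ) μ ≪ μH[1]} := by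
  have hinner : Continuous fun p : Icc a b × E3 => ⟪p.2, γ p.1⟫ :=
    continuous_snd.inner ((continuousOn_iff_continuous_domRestrict.1 hγ).comp continuous_fst)
  have hS := (measurableSet_setOf_map_absolutelyContinuous hinner μ).compl
  convert (MeasurableEmbedding.subtype_coe measurableSet_Icc).measurableSet_image.2 hS using 1
  ext θ
  simp only [mem_image, mem_compl_iff, mem_ofPred_eq, Subtype.exists,
    exists_and_right, exists_eq_right, exists_prop]
  exact and_congr_right fun hθ =>
    not_congr (map_inner_smul_absolutelyContinuous_hausdorffMeasure_iff (hsphere θ hθ) μ)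

/-- For a compactly supported finite Borel measure `μ` on `ℝ³` and a continuous
`γ : I → S²` on a compact interval, the set of `θ ∈ I` where `ρ_{θ#}μ` fails to be
absolutely continuous with respect to `ℋ¹` is Borel measurable. -/
theorem stmt5 (a b : ℝ) (hab : a ≤ b) (γ : ℝ → E3)
    (hγ : ContinuousOn γ (Icc a b))
    (hsphere : ∀ θ ∈ Icc a b, ‖γ θ‖ = 1)
    (μ : Measure E3) [IsFiniteMeasure μ]
    (hcompact : ∃ K : Set E3, IsCompact K ∧ μ Kᶜ = 0) :
    MeasurableSet {θ ∈ Icc a b |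
      ¬ Measure.map (fun x : E3 => ⟪x, γ θ⟫ • γ θ) μ ≪ μH[1]} :=
  stmt5_general a b γ hγ hsphere μ
end
end

section
/- Let μ be a finite Borel measure on ℝ. Then μ is absolutely continuous with respect to Lebesgue measure if and only if ∫_ℝ limsup_{n→∞} n·μ((t − 1/n, t + 1/n)) dt ≥ μ(ℝ) (in which case equality-type comparison holds), i.e. μ ≪ ℋ¹ iff the integral of the upper derivative equals the total mass. -/
open MeasureTheory Metric Set Filter
open scoped ENNReal NNReal Topology

noncomputable section

private lemma div_chain (a : ℝ≥0∞) {x y : ℝ≥0∞} (hx0 : x ≠ 0) (hxt : x ≠ ⊤) :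
    a / x * (x / y) = a / y := by
  have : a / x * (x / y) = a * (x⁻¹ * x) * y⁻¹ := by
    rw [div_eq_mul_inv, div_eq_mul_inv]; ring
  rw [this, ENNReal.inv_mul_cancel hx0 hxt, mul_one, ← div_eq_mul_inv]

private lemma limsup_eq_rnDeriv (μ : Measure ℝ) [IsFiniteMeasure μ] :
    ∀ᵐ t : ℝ, Filter.limsup
      (fun n : ℕ => μ (Ioo (t - 1 / n) (t + 1 / n)) / ENNReal.ofReal (2 / n)) atTop
      = μ.rnDeriv volume t := by
  filter_upwards [Besicovitch.ae_tendsto_rnDeriv μ (volume : Measure ℝ)] with t ht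
  set L := μ.rnDeriv volume t with hL
  set f : ℕ → ℝ≥0∞ := fun n => μ (Ioo (t - 1 / n) (t + 1 / n)) / ENNReal.ofReal (2 / n)
    with hf
  -- upper bound
  have h1n : Tendsto (fun n : ℕ => 1 / (n : ℝ)) atTop (𝓝[>] 0) := by
    apply tendsto_nhdsWithin_of_tendsto_nhds_of_eventually_within _
      tendsto_one_div_atTop_nhds_zero_nat
    filter_upwards [eventually_ge_atTop 1] with n hn
    have : (0 : ℝ) < n := by exact_mod_cast hn
    exact mem_Ioi.2 (by positivity)
  have ha : Tendsto (fun n : ℕ =>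
      μ (closedBall t (1 / n)) / volume (closedBall t (1 / n))) atTop (𝓝 L) :=
    ht.comp h1n
  have hupper : Filter.limsup f atTop ≤ L := by
    rw [← ha.limsup_eq]
    refine limsup_le_limsup ?_ (by isBoundedDefault) (by isBoundedDefault)
    filter_upwards [eventually_ge_atTop 1] with n hn
    have hvol : volume (closedBall t (1 / (n : ℝ))) = ENNReal.ofReal (2 / n) := by
      rw [Real.volume_closedBall, mul_one_div]
    have hsub : Ioo (t - 1 / (n : ℝ)) (t + 1 / n) ⊆ closedBall t (1 / n) := by
      rw [Real.closedBall_eq_Icc]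
      exact Ioo_subset_Icc_self
    simp only [hf, Function.comp]
    rw [hvol]
    exact ENNReal.div_le_div_right (measure_mono hsub) _
  -- lower bound
  have h1n' : Tendsto (fun n : ℕ => 1 / ((n : ℝ) + 1)) atTop (𝓝[>] 0) := by
    apply tendsto_nhdsWithin_of_tendsto_nhds_of_eventually_within _
      tendsto_one_div_add_atTop_nhds_zero_nat
    filter_upwards with n
    have : (0 : ℝ) < (n : ℝ) + 1 := by positivity
    exact mem_Ioi.2 (by positivity)
  have hb : Tendsto (fun n : ℕ =>
      μ (closedBall t (1 / ((n : ℝ) + 1))) / volume (closedBall t (1 / ((n : ℝ) + 1))))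
      atTop (𝓝 L) := ht.comp h1n'
  set c : ℕ → ℝ≥0∞ := fun n => ENNReal.ofReal ((n : ℝ) / (n + 1)) with hc
  have hc1 : Tendsto c atTop (𝓝 1) := by
    have := ENNReal.tendsto_ofReal (tendsto_natCast_div_add_atTop (1 : ℝ))
    simpa [hc] using this
  have hbc : Tendsto (fun n : ℕ => (μ (closedBall t (1 / ((n : ℝ) + 1))) /
      volume (closedBall t (1 / ((n : ℝ) + 1)))) * c n) atTop (𝓝 L) := by
    have := ENNReal.Tendsto.mul hb (Or.inr ENNReal.one_ne_top) hc1 (Or.inl one_ne_zero)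
    simpa using this
  have hlower : L ≤ Filter.liminf f atTop := by
    rw [← hbc.liminf_eq]
    refine liminf_le_liminf ?_ (by isBoundedDefault) (by isBoundedDefault)
    filter_upwards [eventually_ge_atTop 1] with n hn
    have hnpos : (0 : ℝ) < n := by exact_mod_cast hn
    have hn1pos : (0 : ℝ) < (n : ℝ) + 1 := by positivity
    have hvol : volume (closedBall t (1 / ((n : ℝ) + 1))) = ENNReal.ofReal (2 / ((n : ℝ) + 1)) := by
      rw [Real.volume_closedBall, mul_one_div]
    have hx0 : ENNReal.ofReal (2 / ((n : ℝ) + 1)) ≠ 0 := by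
      simp only [ne_eq, ENNReal.ofReal_eq_zero, not_le]
      positivity
    have hxt : ENNReal.ofReal (2 / ((n : ℝ) + 1)) ≠ ⊤ := ENNReal.ofReal_ne_top
    have hceq : c n = ENNReal.ofReal (2 / ((n : ℝ) + 1)) / ENNReal.ofReal (2 / n) := by
      rw [← ENNReal.ofReal_div_of_pos (by positivity)]
      simp only [hc]
      congr 1
      rw [div_div_div_comm]
      rw [div_self (by norm_num : (2:ℝ) ≠ 0), one_div_div]
    rw [hvol, hceq, div_chain _ hx0 hxt]
    have hsub : closedBall t (1 / ((n : ℝ) + 1)) ⊆ Ioo (t - 1 / n) (t + 1 / n) := by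
      rw [Real.closedBall_eq_Icc]
      have hlt : 1 / ((n : ℝ) + 1) < 1 / n :=
        one_div_lt_one_div_of_lt hnpos (lt_add_one _)
      exact Icc_subset_Ioo (by linarith) (by linarith)
    exact ENNReal.div_le_div_right (measure_mono hsub) _
  have := le_trans (liminf_le_limsup (f := atTop) (u := f)) hupper
  exact le_antisymm hupper (le_trans hlower (liminf_le_limsup))

/-- Lebesgue differentiation criterion: a finite Borel measure `μ` on `ℝ` is absolutely
continuous with respect to Lebesgue measure iff the integral of its upper derivative
`limsupₙ μ((t−1/n, t+1/n))/(2/n)` is at least the total mass `μ(ℝ)` (the interval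
`(t−1/n,t+1/n)` has length `2/n`, whence the normalization). -/
theorem stmt7 (μ : Measure ℝ) [IsFiniteMeasure μ] :
    μ ≪ volume ↔
      μ Set.univ ≤ ∫⁻ t : ℝ,
        Filter.limsup (fun n : ℕ => μ (Ioo (t - 1 / n) (t + 1 / n)) / ENNReal.ofReal (2 / n))
          atTop := by
  have hint : (∫⁻ t : ℝ,
      Filter.limsup (fun n : ℕ => μ (Ioo (t - 1 / n) (t + 1 / n)) / ENNReal.ofReal (2 / n))
        atTop) = ∫⁻ t, μ.rnDeriv volume t := lintegral_congr_ae (limsup_eq_rnDeriv μ)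
  rw [hint]
  constructor
  · intro hμ
    exact le_of_eq (Measure.lintegral_rnDeriv hμ).symm
  · intro h
    rw [← Measure.singularPart_eq_zero]
    have hdec := μ.haveLebesgueDecomposition_add volume
    have hwd : (volume.withDensity (μ.rnDeriv volume)) Set.univ = ∫⁻ t, μ.rnDeriv volume t := by
      rw [withDensity_apply _ MeasurableSet.univ, setLIntegral_univ]
    have huniv : μ Set.univ = μ.singularPart volume Set.univ +
        (volume.withDensity (μ.rnDeriv volume)) Set.univ := by
      conv_lhs => rw [hdec]
      simp [Measure.add_apply]
    have hfin : (∫⁻ t, μ.rnDeriv volume t) ≠ ⊤ :=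
      (Measure.lintegral_rnDeriv_lt_top μ volume).ne
    have hsp : μ.singularPart volume Set.univ = 0 := by
      rw [huniv, hwd] at h
      by_contra hne
      have : (∫⁻ t, μ.rnDeriv volume t) < μ.singularPart volume Set.univ +
          ∫⁻ t, μ.rnDeriv volume t :=
        ENNReal.lt_add_right hfin hne |>.trans_le (by rw [add_comm])
      exact absurd h (not_le.2 this)
    exact Measure.measure_univ_eq_zero.1 hsp
end
end

section
/- Let γ : I → S² be a C² unit-speed curve with det(γ, γ', γ'') nonvanishing on a compact interval I. Then there exist r > 0 and constants 0 < c ≤ C such that for all θ, θ' ∈ I with |θ − θ'| ≤ r: c|θ−θ'|² ≤ |⟨(γ × γ')(θ), γ(θ')⟩| ≤ C|θ−θ'|². -/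
/-!
Write `n(θ) = γ(θ) × γ'(θ)`. Since `n(θ)` is orthogonal to `γ(θ)` and `γ'(θ)`, the function
`s ↦ ⟪n(θ), γ(s)⟫` vanishes to second order at `s = θ`, so Taylor's theorem with Lagrange
remainder gives `⟪n(θ), γ(θ')⟫ = det(γ(θ), γ'(θ), γ''(ξ)) (θ' - θ)² / 2` for some `ξ` between
`θ` and `θ'`. The continuous function `(θ, ξ) ↦ det(γ(θ), γ'(θ), γ''(ξ))` does not vanish on the
diagonal of the compact square `I × I`, so by uniform continuity it stays away from zero near
the diagonal, and it is bounded on the whole square.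
-/

open MeasureTheory Metric Set Filter
open scoped ENNReal NNReal RealInnerProductSpace

noncomputable section

theorem exists_mem_uIcc_eq_taylor_two {f : ℝ → ℝ} (hf : ContDiff ℝ 2 f) (x₀ x : ℝ) :
    ∃ ξ ∈ uIcc x₀ x,
      f x = f x₀ + deriv f x₀ * (x - x₀) + deriv (deriv f) ξ / 2 * (x - x₀) ^ 2 := by
  rcases eq_or_ne x₀ x with rfl | hx
  · exact ⟨x₀, left_mem_uIcc, by ring⟩
  obtain ⟨ξ, hξ, htaylor⟩ :=
    taylor_mean_remainder_lagrange_iteratedDeriv (n := 1) hx hf.contDiffOn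
  have hderiv : derivWithin f (uIcc x₀ x) x₀ = deriv f x₀ :=
    (hf.differentiable two_ne_zero).differentiableAt.derivWithin
      ((uniqueDiffOn_uIcc hx) x₀ left_mem_uIcc)
  refine ⟨ξ, uIoo_subset_uIcc_self hξ, ?_⟩
  simp only [taylorWithinEval_succ, taylor_within_zero_eval, iteratedDeriv_succ,
    iteratedDeriv_zero] at htaylor
  norm_num [hderiv] at htaylor
  linarith

section InnerProductSpace

variable {F : Type*} [NormedAddCommGroup F] [InnerProductSpace ℝ F]

theorem deriv_inner_const_left {f : ℝ → F} (hf : Differentiable ℝ f) (v : F) :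
    deriv (fun s => ⟪v, f s⟫) = fun s => ⟪v, deriv f s⟫ := by
  ext s
  simpa using ((hasDerivAt_const s v).inner ℝ (hf s).hasDerivAt).deriv

theorem ContDiff.exists_mem_uIcc_inner_eq_taylor_two {γ : ℝ → F} (hγ : ContDiff ℝ 2 γ) (v : F)
    (x₀ x : ℝ) : ∃ ξ ∈ uIcc x₀ x, ⟪v, γ x⟫ =
      ⟪v, γ x₀⟫ + ⟪v, deriv γ x₀⟫ * (x - x₀) + ⟪v, deriv (deriv γ) ξ⟫ / 2 * (x - x₀) ^ 2 := by
  have hderiv := deriv_inner_const_left (hγ.differentiable two_ne_zero) v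
  have hderiv2 := deriv_inner_const_left hγ.differentiable_deriv_two v
  simpa only [hderiv, hderiv2] using
    exists_mem_uIcc_eq_taylor_two (contDiff_const (c := v).inner ℝ hγ) x₀ x

end InnerProductSpace

theorem IsCompact.exists_pos_le_abs_near_diagonal {α : Type*} [PseudoMetricSpace α] {K : Set α}
    (hK : IsCompact K) {h : α × α → ℝ} (hh : Continuous h) (hdiag : ∀ x ∈ K, h (x, x) ≠ 0) :
    ∃ r > (0 : ℝ), ∃ c > (0 : ℝ), ∀ x ∈ K, ∀ y ∈ K, dist y x ≤ r → c ≤ |h (x, y)| := by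
  obtain ⟨m, hm, hm_le⟩ := hK.exists_forall_le' (f := fun x => |h (x, x)|)
    (by fun_prop) fun x hx => abs_pos.2 (hdiag x hx)
  obtain ⟨δ, hδ, hclose⟩ := Metric.uniformContinuousOn_iff.1
    ((hK.prod hK).uniformContinuousOn_of_continuous hh.continuousOn) (m / 2) (half_pos hm)
  refine ⟨δ / 2, half_pos hδ, m / 2, half_pos hm, fun x hx y hy hxy => ?_⟩
  have hdist : dist (x, y) (x, x) < δ := by
    rw [Prod.dist_eq, dist_self, max_eq_right dist_nonneg]
    linarith
  have hnear := hclose _ ⟨hx, hy⟩ _ ⟨hx, hx⟩ hdist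
  rw [Real.dist_eq] at hnear
  linarith [hm_le x hx, abs_sub_abs_le_abs_sub (h (x, x)) (h (x, y)),
    abs_sub_comm (h (x, x)) (h (x, y))]

theorem inner_cross3_self_left (u v : E3) : ⟪cross3 u v, u⟫ = 0 := by
  simp [cross3, PiLp.inner_apply, Fin.sum_univ_three]; ring

theorem inner_cross3_self_right (u v : E3) : ⟪cross3 u v, v⟫ = 0 := by
  simp [cross3, PiLp.inner_apply, Fin.sum_univ_three]; ring

theorem inner_cross3_eq_det3 (u v w : E3) : ⟪cross3 u v, w⟫ = det3 u v w := by
  simp [cross3, det3, PiLp.inner_apply, Fin.sum_univ_three]; ring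

theorem Continuous.det3 {α : Type*} [TopologicalSpace α] {f g k : α → E3} (hf : Continuous f)
    (hg : Continuous g) (hk : Continuous k) : Continuous fun x => det3 (f x) (g x) (k x) := by
  simp only [_root_.det3, cross3, PiLp.inner_apply, RCLike.inner_apply, Real.ringHom_apply,
    Fin.sum_univ_three, Matrix.cons_val_zero, Matrix.cons_val_one, Matrix.cons_val]
  fun_prop

theorem stmt8_general (a b : ℝ) (γ : ℝ → E3)
    (hγ : ContDiff ℝ 2 γ)
    (hdet : ∀ θ ∈ Icc a b, det3 (γ θ) (deriv γ θ) (deriv (deriv γ) θ) ≠ 0) :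
    ∃ r > (0 : ℝ), ∃ c C : ℝ, 0 < c ∧ c ≤ C ∧
      ∀ θ ∈ Icc a b, ∀ θ' ∈ Icc a b, |θ - θ'| ≤ r →
        c * |θ - θ'| ^ 2 ≤ |⟪cross3 (γ θ) (deriv γ θ), γ θ'⟫| ∧
        |⟪cross3 (γ θ) (deriv γ θ), γ θ'⟫| ≤ C * |θ - θ'| ^ 2 := by
  set D : ℝ × ℝ → ℝ := fun p => det3 (γ p.1) (deriv γ p.1) (deriv (deriv γ) p.2)
  have hD : Continuous D :=
    (hγ.continuous.comp continuous_fst).det3 ((hγ.continuous_deriv one_le_two).comp continuous_fst)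
      (((hγ.deriv' (n := 1)).continuous_deriv le_rfl).comp continuous_snd)
  obtain ⟨r, hr, c, hc, hc_le⟩ := isCompact_Icc.exists_pos_le_abs_near_diagonal hD hdet
  obtain ⟨M, hM⟩ := (isCompact_Icc.prod isCompact_Icc).exists_bound_of_continuousOn hD.continuousOn
  -- `max`, since `c ≤ M` fails when `Icc a b` is empty
  refine ⟨r, hr, c / 2, max c M / 2, half_pos hc, by gcongr; exact le_max_left _ _,
    fun θ hθ θ' hθ' hθθ' => ?_⟩
  obtain ⟨ξ, hξ, htaylor⟩ :=
    hγ.exists_mem_uIcc_inner_eq_taylor_two (cross3 (γ θ) (deriv γ θ)) θ θ'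
  rw [inner_cross3_self_left, inner_cross3_self_right,
    inner_cross3_eq_det3 _ _ (deriv (deriv γ) ξ), zero_mul, add_zero, zero_add] at htaylor
  have hξ_mem : ξ ∈ Icc a b := uIcc_subset_Icc hθ hθ' hξ
  have hξ_near : dist ξ θ ≤ r := by
    rw [Real.dist_eq]
    exact (abs_sub_left_of_mem_uIcc hξ).trans (abs_sub_comm θ θ' ▸ hθθ')
  have hlow : c ≤ |D (θ, ξ)| := hc_le θ hθ ξ hξ_mem hξ_near
  have hup : |D (θ, ξ)| ≤ max c M := (hM (θ, ξ) ⟨hθ, hξ_mem⟩).trans (le_max_right _ _)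
  rw [htaylor, abs_mul, abs_div, abs_two, abs_pow, abs_sub_comm θ' θ]
  exact ⟨by gcongr, by gcongr⟩

/-- Quadratic two-sided Taylor bound: for a `C²` unit-speed curve `γ : I → S²` with
`det(γ,γ',γ'')` nonvanishing on a compact interval `I`, there are `r > 0` and
`0 < c ≤ C` with `c|θ−θ'|² ≤ |⟨(γ×γ')(θ), γ(θ')⟩| ≤ C|θ−θ'|²` for `θ, θ' ∈ I`,
`|θ−θ'| ≤ r`. -/
theorem stmt8 (a b : ℝ) (hab : a ≤ b) (γ : ℝ → E3)
    (hγ : ContDiff ℝ 2 γ)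
    (hsphere : ∀ θ ∈ Icc a b, ‖γ θ‖ = 1)
    (hunit : ∀ θ ∈ Icc a b, ‖deriv γ θ‖ = 1)
    (hdet : ∀ θ ∈ Icc a b, det3 (γ θ) (deriv γ θ) (deriv (deriv γ) θ) ≠ 0) :
    ∃ r > (0 : ℝ), ∃ c C : ℝ, 0 < c ∧ c ≤ C ∧
      ∀ θ ∈ Icc a b, ∀ θ' ∈ Icc a b, |θ - θ'| ≤ r →
        c * |θ - θ'| ^ 2 ≤ |⟪cross3 (γ θ) (deriv γ θ), γ θ'⟫| ∧
        |⟪cross3 (γ θ) (deriv γ θ), γ θ'⟫| ≤ C * |θ - θ'| ^ 2 :=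
  stmt8_general a b γ hγ hdet
end
end
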